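/- arXiv:2308.02210 — 5 statements merged into one kernel-verified Lean document; each statement's English description precedes it below -/
import Mathlib

section
/- Let X be a compact metric space, let K_n be nonempty closed subsets of X, and suppose the functions dist(·, K_n) converge uniformly on X to a function f. Then the set K := {p ∈ X : f(p) = 0} is nonempty and closed, and f = dist(·, K). -/
/-!
The limit `f` is `1`-Lipschitz, being a pointwise limit of the `1`-Lipschitz functions
`infDist · (K n)`; as it vanishes on its zero set `Z`, this gives `f p ≤ infDist p Z`.
Conversely, nearest points to `p` in `K n` accumulate, by compactness, at some `q` with
`f q = 0` and `dist p q = f p`.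
-/

open Filter Metric Topology

section

variable {X : Type*} [MetricSpace X] {K : ℕ → Set X} {f : X → ℝ}

theorem lipschitzWith_one_of_tendsto_infDist
    (hf : ∀ p, Tendsto (fun n => infDist p (K n)) atTop (𝓝 (f p))) : LipschitzWith 1 f :=
  (isClosed_setOfPred_lipschitzWith 1).mem_of_tendsto (tendsto_pi_nhds.2 hf)
    (Eventually.of_forall fun n => lipschitz_infDist_pt (K n))

theorem LipschitzWith.le_infDist_of_eqOn_zero {s : Set X} (hf : LipschitzWith 1 f)
    (hs : s.Nonempty) (hzero : s.EqOn f 0) (p : X) : f p ≤ infDist p s :=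
  (le_infDist hs).2 fun q hq => by
    simpa [hzero hq] using (le_abs_self _).trans (hf.dist_le_mul p q)

theorem exists_eq_zero_dist_eq_of_tendsto_infDist [ProperSpace X] (hne : ∀ n, (K n).Nonempty)
    (hf : ∀ p, Tendsto (fun n => infDist p (K n)) atTop (𝓝 (f p))) (p : X) :
    ∃ q, f q = 0 ∧ dist p q = f p := by
  choose r hrK hr using fun n => exists_mem_closure_infDist_eq_dist (hne n) p
  obtain ⟨C, hC⟩ := (hf p).bddAbove_range
  have hr_mem (n : ℕ) : r n ∈ closedBall p C := by
    rw [mem_closedBall, dist_comm, ← hr]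
    exact hC ⟨n, rfl⟩
  obtain ⟨q, -, φ, hφ, hrq⟩ := tendsto_subseq_of_bounded isBounded_closedBall hr_mem
  have hfq : f q = 0 := by
    refine tendsto_nhds_unique ((hf q).comp hφ.tendsto_atTop) (squeeze_zero
      (fun n => infDist_nonneg) (fun n => ?_) (tendsto_iff_dist_tendsto_zero.1 hrq))
    rw [Function.comp_apply, ← infDist_closure, dist_comm]
    exact infDist_le_dist_of_mem (hrK (φ n))
  refine ⟨q, hfq, tendsto_nhds_unique (tendsto_const_nhds.dist hrq) ?_⟩
  simpa only [Function.comp_def, hr] using (hf p).comp hφ.tendsto_atTop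

end

theorem stmt10_general {X : Type*} [MetricSpace X] [CompactSpace X]
    (K : ℕ → Set X) (hne : ∀ n, (K n).Nonempty)
    (f : X → ℝ)
    (hconv : TendstoUniformly (fun n p => Metric.infDist p (K n)) f Filter.atTop) :
    ({p : X | f p = 0}).Nonempty ∧ IsClosed {p : X | f p = 0} ∧
    ∀ p : X, f p = Metric.infDist p {q : X | f q = 0} := by
  have hf := hconv.tendsto_at
  have hlip := lipschitzWith_one_of_tendsto_infDist hf
  choose q hq0 hdist using exists_eq_zero_dist_eq_of_tendsto_infDist hne hf
  have hZ : ({p : X | f p = 0}).Nonempty := ⟨q (hne 0).some, hq0 _⟩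
  refine ⟨hZ, isClosed_eq hlip.continuous continuous_const, fun p => ?_⟩
  exact le_antisymm (hlip.le_infDist_of_eqOn_zero hZ (fun _ => id) p)
    (hdist p ▸ infDist_le_dist_of_mem (hq0 p))

/-- Let `X` be a compact metric space, `K n` nonempty closed subsets of `X`, and suppose
the functions `dist(·, K n)` converge uniformly on `X` to a function `f`.  Then
`K := {p ∈ X : f p = 0}` is nonempty and closed, and `f = dist(·, K)`. -/
theorem stmt10 {X : Type*} [MetricSpace X] [CompactSpace X]
    (K : ℕ → Set X) (hne : ∀ n, (K n).Nonempty) (hcl : ∀ n, IsClosed (K n))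
    (f : X → ℝ)
    (hconv : TendstoUniformly (fun n p => Metric.infDist p (K n)) f Filter.atTop) :
    ({p : X | f p = 0}).Nonempty ∧ IsClosed {p : X | f p = 0} ∧
    ∀ p : X, f p = Metric.infDist p {q : X | f q = 0} :=
  stmt10_general K hne f hconv
end

section
/- Let M be a compact connected metric space and p ≠ q two points of M. Then there exists a compact connected subset X of M containing p and q such that X \ {p, q} is also connected. -/
open Set Topology

section Aux

variable {M : Type*} [MetricSpace M] [CompactSpace M]

/-- `p` and `q` cannot be separated by a disjoint open cover of `S`. -/
def NoSep (p q : M) (S : Set M) : Prop :=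
  ∀ U V : Set M, IsOpen U → IsOpen V → S ⊆ U ∪ V → Disjoint U V → p ∈ U → q ∈ V → False

lemma noSep_symm {p q : M} {S : Set M} (h : NoSep p q S) : NoSep q p S :=
  fun U V hU hV hc hd hq hp => h V U hV hU (by rwa [union_comm]) hd.symm hp hq

lemma noSep_of_isPreconnected {p q : M} {S : Set M} (h : IsPreconnected S)
    (hp : p ∈ S) (hq : q ∈ S) : NoSep p q S := by
  intro U V hU hV hc hd hpU hqV
  obtain ⟨x, -, hxU, hxV⟩ := h U V hU hV hc ⟨p, hp, hpU⟩ ⟨q, hq, hqV⟩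
  exact hd.ne_of_mem hxU hxV rfl

lemma NoSep.elim_compacts {p q : M} {S K L : Set M} (h : NoSep p q S)
    (hK : IsCompact K) (hL : IsCompact L) (hd : Disjoint K L)
    (hc : S ⊆ K ∪ L) (hp : p ∈ K) (hq : q ∈ L) : False := by
  obtain ⟨U, V, hU, hV, hKU, hLV, hUV⟩ := SeparatedNhds.of_isCompact_isCompact hK hL hd
  exact h U V hU hV (hc.trans (union_subset_union hKU hLV)) hUV (hKU hp) (hLV hq)

/-- The family of closed sets containing `p` and `q` in which `p` and `q` cannot be
separated by clopen sets. -/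
def Fam (p q : M) : Set (Set M) := {S | IsClosed S ∧ p ∈ S ∧ q ∈ S ∧ NoSep p q S}

lemma fam_comm {p q : M} : Fam p q = Fam q p := by
  ext S
  exact ⟨fun ⟨h1, h2, h3, h4⟩ => ⟨h1, h3, h2, noSep_symm h4⟩,
    fun ⟨h1, h2, h3, h4⟩ => ⟨h1, h3, h2, noSep_symm h4⟩⟩

lemma fam_sInter_chain {p q : M} {c : Set (Set M)} (hc : c ⊆ Fam p q)
    (hchain : IsChain (· ⊆ ·) c) (hne : c.Nonempty) : ⋂₀ c ∈ Fam p q := by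
  refine ⟨isClosed_sInter fun S hS => (hc hS).1, fun S hS => (hc hS).2.1,
    fun S hS => (hc hS).2.2.1, ?_⟩
  intro U V hU hV hcov hd hp hq
  haveI : Nonempty c := hne.to_subtype
  obtain ⟨⟨S, hS⟩, hsub⟩ := exists_subset_nhds_of_compactSpace
    (V := fun S : c => (S : Set M))
    (fun s t => by
      rcases hchain.total s.2 t.2 with h | h
      · exact ⟨s, subset_rfl, h⟩
      · exact ⟨t, h, subset_rfl⟩)
    (fun S => (hc S.2).1)
    (U := U ∪ V)
    (fun x hx => (hU.union hV).mem_nhds (hcov (by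
      rw [mem_sInter]
      intro t ht
      exact mem_iInter.mp hx ⟨t, ht⟩)))
  exact (hc hS).2.2.2 U V hU hV hsub hd hp hq

lemma minimal_connected {p q : M} {S : Set M} (hmin : Minimal (· ∈ Fam p q) S) :
    IsConnected S := by
  obtain ⟨⟨hScl, hpS, hqS, hsep⟩, hmin'⟩ := hmin
  have hScomp : IsCompact S := hScl.isCompact
  haveI : CompactSpace S := isCompact_iff_compactSpace.mp hScomp
  have hq' : (⟨q, hqS⟩ : S) ∈ connectedComponent (⟨p, hpS⟩ : S) := by
    rw [connectedComponent_eq_iInter_isClopen, mem_iInter]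
    rintro ⟨Z, hZ, hpZ⟩
    by_contra hqZ
    refine hsep.elim_compacts (K := (↑) '' Z) (L := (↑) '' Zᶜ)
      ((hZ.isClosed.isCompact).image continuous_subtype_val)
      ((hZ.compl.isClosed.isCompact).image continuous_subtype_val)
      ((Set.disjoint_image_iff Subtype.val_injective).mpr disjoint_compl_right)
      ?_ ⟨_, hpZ, rfl⟩ ⟨_, hqZ, rfl⟩
    intro x hx
    by_cases h : (⟨x, hx⟩ : S) ∈ Z
    · exact Or.inl ⟨_, h, rfl⟩
    · exact Or.inr ⟨_, h, rfl⟩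
  set C : Set M := connectedComponentIn S p with hC
  have hCconn : IsPreconnected C := isPreconnected_connectedComponentIn
  have hCimg : C = (↑) '' connectedComponent (⟨p, hpS⟩ : S) :=
    connectedComponentIn_eq_image hpS
  have hpC : p ∈ C := mem_connectedComponentIn hpS
  have hqC : q ∈ C := by rw [hCimg]; exact ⟨_, hq', rfl⟩
  have hCcl : IsClosed C := by
    rw [hCimg]
    exact ((isClosed_connectedComponent.isCompact).image continuous_subtype_val).isClosed
  have hCF : C ∈ Fam p q := ⟨hCcl, hpC, hqC, noSep_of_isPreconnected hCconn hpC hqC⟩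
  have : S ⊆ C := hmin' hCF (connectedComponentIn_subset S p)
  have hSC : S = C := subset_antisymm this (connectedComponentIn_subset S p)
  rw [hSC]
  exact ⟨⟨p, hpC⟩, hCconn⟩

lemma closure_sub {p q : M} {S A B : Set M} (hScl : IsClosed S)
    (hABu : A ∪ B = S \ {p, q}) (hBA : Disjoint A (closure B)) :
    closure B ⊆ B ∪ {p, q} := by
  intro x hx
  have hxS : x ∈ S := by
    have hBS : B ⊆ S := fun y hy => (hABu ▸ mem_union_right A hy : y ∈ S \ _).1
    exact closure_minimal hBS hScl hx
  by_cases hpq : x ∈ ({p, q} : Set M)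
  · exact Or.inr hpq
  · have : x ∈ A ∪ B := by rw [hABu]; exact ⟨hxS, hpq⟩
    rcases this with h | h
    · exact absurd rfl (hBA.ne_of_mem h hx)
    · exact Or.inl h

/-- Key step: if `S` is minimal and `S \ {p, q} = A ∪ B` is a separation, then
`p ∈ closure B`. -/
lemma step1 {p q : M} {S A B : Set M} (hmin : Minimal (· ∈ Fam p q) S)
    (hB : B.Nonempty) (hABu : A ∪ B = S \ {p, q})
    (hAB : Disjoint (closure A) B) (hBA : Disjoint A (closure B)) :
    p ∈ closure B := by
  obtain ⟨⟨hScl, hpS, hqS, hsep⟩, hmin'⟩ := hmin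
  by_contra hpB
  have hAS : A ⊆ S := fun y hy => (hABu ▸ mem_union_left B hy : y ∈ S \ _).1
  have hclAS : closure A ⊆ S := closure_minimal hAS hScl
  have hclB : closure B ⊆ B ∪ {p, q} := closure_sub hScl hABu hBA
  have hclBq : closure B ⊆ B ∪ {q} := by
    intro x hx
    rcases hclB hx with h | h
    · exact Or.inl h
    · rcases h with h | h
      · exact absurd hx (h ▸ hpB)
      · exact Or.inr h
  set S' : Set M := closure A ∪ {p, q} with hS'
  have hS'cl : IsClosed S' := isClosed_closure.union (Set.Finite.isClosed (by simp))
  have hS'S : S' ⊆ S := union_subset hclAS (by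
    rintro x (rfl | rfl)
    exacts [hpS, hqS])
  have hpS' : p ∈ S' := Or.inr (Or.inl rfl)
  have hqS' : q ∈ S' := Or.inr (Or.inr rfl)
  -- `closure B` meets `S'` only at `q`.
  have hclBS' : closure B ∩ S' ⊆ {q} := by
    rintro x ⟨hxB, hxS'⟩
    rcases hclBq hxB with h | h
    · -- x ∈ B
      rcases hxS' with h' | h'
      · exact absurd rfl (hAB.ne_of_mem h' h)
      · exact absurd h' (by
          have : x ∈ S \ {p, q} := hABu ▸ mem_union_right A h
          exact this.2)
    · exact h
  -- S = S' ∪ closure B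
  have hScov : S ⊆ S' ∪ closure B := by
    intro x hx
    by_cases hpq : x ∈ ({p, q} : Set M)
    · exact Or.inl (Or.inr hpq)
    · have : x ∈ A ∪ B := by rw [hABu]; exact ⟨hx, hpq⟩
      rcases this with h | h
      · exact Or.inl (Or.inl (subset_closure h))
      · exact Or.inr (subset_closure h)
  have hS'F : S' ∈ Fam p q := by
    refine ⟨hS'cl, hpS', hqS', ?_⟩
    intro U V hU hV hcov hd hpU hqV
    refine hsep.elim_compacts (K := S' \ V) (L := (S' \ U) ∪ closure B)
      (hS'cl.sdiff hV).isCompact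
      (((hS'cl.sdiff hU).union isClosed_closure).isCompact) ?_ ?_
      ⟨hpS', fun hpV => hd.ne_of_mem hpU hpV rfl⟩
      (Or.inl ⟨hqS', fun hqU => hd.ne_of_mem hqU hqV rfl⟩)
    · rw [disjoint_union_right]
      constructor
      · rw [Set.disjoint_left]
        rintro x hx hx'
        rcases hcov hx.1 with h | h
        · exact hx'.2 h
        · exact hx.2 h
      · rw [Set.disjoint_left]
        rintro x hx hx'
        have hq' : x = q := hclBS' ⟨hx', hx.1⟩
        subst hq'
        exact hx.2 hqV
    · intro x hx
      rcases hScov hx with h | h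
      · rcases hcov h with h' | h'
        · exact Or.inl ⟨h, fun hv => hd.ne_of_mem h' hv rfl⟩
        · exact Or.inr (Or.inl ⟨h, fun hu => hd.ne_of_mem hu h' rfl⟩)
      · exact Or.inr (Or.inr h)
  have hSS' : S ⊆ S' := hmin' hS'F hS'S
  obtain ⟨b, hb⟩ := hB
  have hbS : b ∈ S \ {p, q} := hABu ▸ mem_union_right A hb
  rcases hSS' hbS.1 with h | h
  · exact absurd rfl (hAB.ne_of_mem h hb)
  · exact hbS.2 h

end Aux

/-- Let `M` be a compact connected metric space and `p ≠ q` two points of `M`.  Then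
there exists a compact connected subset `X` of `M` containing `p` and `q` such that
`X \ {p, q}` is also connected. -/
theorem stmt13 {M : Type*} [MetricSpace M] [CompactSpace M] [ConnectedSpace M]
    (p q : M) (hpq : p ≠ q) :
    ∃ X : Set M, IsCompact X ∧ IsConnected X ∧ p ∈ X ∧ q ∈ X ∧
      IsConnected (X \ {p, q}) := by
  -- `univ` belongs to the family.
  have huniv : univ ∈ Fam p q := by
    refine ⟨isClosed_univ, mem_univ p, mem_univ q, ?_⟩
    intro U V hU hV hcov hd hpU hqV
    have hVc : Uᶜ = V := subset_antisymm
      (fun x hx => (hcov (mem_univ x)).resolve_left hx)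
      hd.subset_compl_left
    have hUclopen : IsClopen U := ⟨by rw [← isOpen_compl_iff, hVc]; exact hV, hU⟩
    rcases isClopen_iff.mp hUclopen with rfl | rfl
    · exact hpU
    · exact hd.ne_of_mem (mem_univ q) hqV rfl
  obtain ⟨S, -, hmin⟩ := zorn_superset_nonempty (Fam p q)
    (fun c hc hchain hne =>
      ⟨⋂₀ c, fam_sInter_chain hc hchain hne, fun s hs => sInter_subset_of_mem hs⟩)
    univ huniv
  obtain ⟨hScl, hpS, hqS, hsep⟩ := hmin.1
  have hconn : IsConnected S := minimal_connected hmin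
  refine ⟨S, hScl.isCompact, hconn, hpS, hqS, ?_, ?_⟩
  · -- S \ {p, q} is nonempty
    by_contra hne
    rw [not_nonempty_iff_eq_empty, diff_eq_empty] at hne
    obtain ⟨U, V, hU, hV, hpU, hqV, hd⟩ := t2_separation hpq
    exact hsep U V hU hV (hne.trans (by rintro x (rfl | rfl); exacts [Or.inl hpU, Or.inr hqV]))
      hd hpU hqV
  · -- S \ {p, q} is preconnected
    intro U V hU hV hcov ⟨a, haS, haU⟩ ⟨b, hbS, hbV⟩
    by_contra hne
    rw [not_nonempty_iff_eq_empty] at hne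
    set A : Set M := (S \ {p, q}) ∩ U with hA
    set B : Set M := (S \ {p, q}) ∩ V with hB
    have hABu : A ∪ B = S \ {p, q} := by
      rw [hA, hB, ← inter_union_distrib_left, inter_eq_left]
      exact hcov
    have hAVc : A ⊆ Vᶜ := fun x hx hxV =>
      (eq_empty_iff_forall_notMem.mp hne x) ⟨hx.1, hx.2, hxV⟩
    have hBUc : B ⊆ Uᶜ := fun x hx hxU =>
      (eq_empty_iff_forall_notMem.mp hne x) ⟨hx.1, hxU, hx.2⟩
    have hAB : Disjoint (closure A) B :=
      disjoint_compl_left.mono (closure_minimal hAVc hV.isClosed_compl) (fun x hx => hx.2)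
    have hBA : Disjoint A (closure B) :=
      (disjoint_compl_left.mono (closure_minimal hBUc hU.isClosed_compl)
        (fun x hx => hx.2)).symm
    have hAne : A.Nonempty := ⟨a, haS, haU⟩
    have hBne : B.Nonempty := ⟨b, hbS, hbV⟩
    -- the four closure facts
    have hminqp : Minimal (· ∈ Fam q p) S := by rwa [← fam_comm]
    have hpair : S \ {q, p} = S \ {p, q} := by rw [pair_comm]
    have hpB : p ∈ closure B := step1 hmin hBne hABu hAB hBA
    have hpA : p ∈ closure A := step1 hmin hAne (by rw [union_comm]; exact hABu) hBA.symm hAB.symm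
    have hqB : q ∈ closure B := step1 hminqp hBne (by rw [hpair]; exact hABu) hAB hBA
    have hqA : q ∈ closure A := step1 hminqp hAne
      (by rw [hpair, union_comm]; exact hABu) hBA.symm hAB.symm
    have hclA : closure A ⊆ A ∪ {p, q} := closure_sub hScl (by rw [union_comm]; exact hABu) hAB.symm
    have hclB : closure B ⊆ B ∪ {p, q} := closure_sub hScl hABu hBA
    have hclAB : closure A ∩ closure B ⊆ {p, q} := by
      rintro x ⟨hxA, hxB⟩
      rcases hclA hxA with h | h
      · exact absurd rfl (hBA.ne_of_mem h hxB)
      · exact h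
    have hAS : A ⊆ S := fun y hy => (hABu ▸ mem_union_left B hy : y ∈ S \ _).1
    have hBS : B ⊆ S := fun y hy => (hABu ▸ mem_union_right A hy : y ∈ S \ _).1
    have hclAS : closure A ⊆ S := closure_minimal hAS hScl
    have hclBS : closure B ⊆ S := closure_minimal hBS hScl
    -- one of `closure A`, `closure B` is in the family; either contradicts minimality
    by_cases hFA : NoSep p q (closure A)
    · have hsub : S ⊆ closure A := hmin.2 ⟨isClosed_closure, hpA, hqA, hFA⟩ hclAS
      have hbB : b ∈ B := ⟨hbS, hbV⟩
      exact absurd rfl (hAB.ne_of_mem (hsub (hBS hbB)) hbB)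
    · by_cases hFB : NoSep p q (closure B)
      · have hsub : S ⊆ closure B := hmin.2 ⟨isClosed_closure, hpB, hqB, hFB⟩ hclBS
        exact absurd rfl ((hBA.ne_of_mem ⟨haS, haU⟩ (hsub (hAS ⟨haS, haU⟩))))
      · -- both fail: build a separation of S
        unfold NoSep at hFA hFB
        push_neg at hFA hFB
        obtain ⟨U₁, V₁, hU₁, hV₁, hc₁, hd₁, hp₁, hq₁, -⟩ := hFA
        obtain ⟨U₂, V₂, hU₂, hV₂, hc₂, hd₂, hp₂, hq₂, -⟩ := hFB
        refine hsep.elim_compacts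
          (K := (closure A \ V₁) ∪ (closure B \ V₂))
          (L := (closure A \ U₁) ∪ (closure B \ U₂))
          (((isClosed_closure.sdiff hV₁).union (isClosed_closure.sdiff hV₂)).isCompact)
          (((isClosed_closure.sdiff hU₁).union (isClosed_closure.sdiff hU₂)).isCompact)
          ?_ ?_
          (Or.inl ⟨hpA, fun h => hd₁.ne_of_mem hp₁ h rfl⟩)
          (Or.inr ⟨hqB, fun h => hd₂.ne_of_mem h hq₂ rfl⟩)
        · rw [disjoint_union_left, disjoint_union_right, disjoint_union_right]
          refine ⟨⟨?_, ?_⟩, ?_, ?_⟩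
          · rw [Set.disjoint_left]
            rintro x hx hx'
            rcases hc₁ hx.1 with h | h
            exacts [hx'.2 h, hx.2 h]
          · rw [Set.disjoint_left]
            rintro x hx hx'
            rcases hclAB ⟨hx.1, hx'.1⟩ with rfl | rfl
            · exact hx'.2 hp₂
            · exact hx.2 hq₁
          · rw [Set.disjoint_left]
            rintro x hx hx'
            rcases hclAB ⟨hx'.1, hx.1⟩ with rfl | rfl
            · exact hx'.2 hp₁
            · exact hx.2 hq₂
          · rw [Set.disjoint_left]
            rintro x hx hx'
            rcases hc₂ hx.1 with h | h
            exacts [hx'.2 h, hx.2 h]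
        · intro x hx
          have hxAB : x ∈ closure A ∪ closure B := by
            by_cases hpq' : x ∈ ({p, q} : Set M)
            · rcases hpq' with rfl | rfl
              exacts [Or.inl hpA, Or.inl hqA]
            · have : x ∈ A ∪ B := by rw [hABu]; exact ⟨hx, hpq'⟩
              rcases this with h | h
              exacts [Or.inl (subset_closure h), Or.inr (subset_closure h)]
          rcases hxAB with h | h
          · rcases hc₁ h with h' | h'
            · exact Or.inl (Or.inl ⟨h, fun hv => hd₁.ne_of_mem h' hv rfl⟩)
            · exact Or.inr (Or.inl ⟨h, fun hu => hd₁.ne_of_mem hu h' rfl⟩)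
          · rcases hc₂ h with h' | h'
            · exact Or.inl (Or.inr ⟨h, fun hv => hd₂.ne_of_mem h' hv rfl⟩)
            · exact Or.inr (Or.inr ⟨h, fun hu => hd₂.ne_of_mem hu h' rfl⟩)
end

section
/- Let X be a metric space and f : X → (0,1) a proper continuous map. Suppose that for every compact interval J ⊂ (0,1) there is a compact connected subset Y of X with f(Y) = J. Then there exists a closed connected subset Q of X with f(Q) = (0,1). -/
open Set Topology OnePoint

/-- If a preconnected set `S` is the union of two subsets `P`, `Q` each closed in `S`,
whose intersection is contained in `{a}` with `a ∈ P ∩ Q`, then `P` is preconnected. -/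
private lemma lemA_aux {α : Type*} [TopologicalSpace α] {S P Q : Set α} {a : α} {F₁ F₂ : Set α}
    (hS : IsPreconnected S) (hPQ : P ∪ Q = S)
    (hPc : closure P ∩ S ⊆ P) (hQc : closure Q ∩ S ⊆ Q)
    (hint : P ∩ Q ⊆ {a}) (haP : a ∈ P)
    (h₁ : IsClosed F₁) (h₂ : IsClosed F₂) (hcov : P ⊆ F₁ ∪ F₂)
    (hne₂ : (P ∩ F₂).Nonempty) (haF : a ∈ F₁)
    (hempty : P ∩ (F₁ ∩ F₂) = ∅) : False := by
  have hPS : P ⊆ S := hPQ ▸ subset_union_left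
  have hQS : Q ⊆ S := hPQ ▸ subset_union_right
  obtain ⟨x, hxS, hx⟩ :
      (S ∩ ((closure P ∩ F₁ ∪ closure Q) ∩ (closure P ∩ F₂))).Nonempty := by
    refine isPreconnected_closed_iff.1 hS _ _
      ((isClosed_closure.inter h₁).union isClosed_closure) (isClosed_closure.inter h₂)
      ?_ ?_ ?_
    · intro x hxS
      rcases (hPQ ▸ hxS : x ∈ P ∪ Q) with hxP | hxQ
      · rcases hcov hxP with h | h
        · exact Or.inl (Or.inl ⟨subset_closure hxP, h⟩)
        · exact Or.inr ⟨subset_closure hxP, h⟩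
      · exact Or.inl (Or.inr (subset_closure hxQ))
    · exact ⟨a, hPS haP, Or.inl ⟨subset_closure haP, haF⟩⟩
    · obtain ⟨y, hyP, hyF₂⟩ := hne₂
      exact ⟨y, hPS hyP, subset_closure hyP, hyF₂⟩
  obtain ⟨hx1, hxcp, hxF₂⟩ := hx
  have hxP : x ∈ P := hPc ⟨hxcp, hxS⟩
  rcases hx1 with ⟨_, hxF₁⟩ | hxQ
  · exact Set.eq_empty_iff_forall_notMem.1 hempty x ⟨hxP, hxF₁, hxF₂⟩
  · have hxQ' : x ∈ Q := hQc ⟨hxQ, hxS⟩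
    have : x = a := hint ⟨hxP, hxQ'⟩
    subst this
    exact Set.eq_empty_iff_forall_notMem.1 hempty x ⟨hxP, haF, hxF₂⟩

private lemma lemA {α : Type*} [TopologicalSpace α] {S P Q : Set α} {a : α}
    (hS : IsPreconnected S) (hPQ : P ∪ Q = S)
    (hPc : closure P ∩ S ⊆ P) (hQc : closure Q ∩ S ⊆ Q)
    (hint : P ∩ Q ⊆ {a}) (haP : a ∈ P) :
    IsPreconnected P := by
  rw [isPreconnected_closed_iff]
  intro F₁ F₂ h₁ h₂ hcov hne₁ hne₂
  by_contra hne
  have hempty : P ∩ (F₁ ∩ F₂) = ∅ := not_nonempty_iff_eq_empty.1 hne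
  rcases hcov haP with haF | haF
  · exact lemA_aux hS hPQ hPc hQc hint haP h₁ h₂ hcov hne₂ haF hempty
  · refine lemA_aux hS hPQ hPc hQc hint haP h₂ h₁
      (fun x hx => (hcov hx).symm) hne₁ haF ?_
    rw [inter_comm F₂ F₁]; exact hempty

/-- In a minimal continuum `M` containing `a` and `b`, removing `a` keeps it preconnected. -/
private lemma lemB {α : Type*} [TopologicalSpace α] [T1Space α] {M : Set α} {a b : α}
    (hM : IsPreconnected M) (hMcl : IsClosed M) (haM : a ∈ M) (hbM : b ∈ M) (hab : a ≠ b)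
    (hmin : ∀ M' ⊆ M, IsClosed M' → IsPreconnected M' → a ∈ M' → b ∈ M' → M' = M) :
    IsPreconnected (M \ {a}) := by
  rw [isPreconnected_closed_iff]
  intro F₁ F₂ h₁ h₂ hcov hne₁ hne₂
  by_contra hne
  have hempty : (M \ {a}) ∩ (F₁ ∩ F₂) = ∅ := not_nonempty_iff_eq_empty.1 hne
  have key : ∀ F₁ F₂ : Set α, IsClosed F₁ → IsClosed F₂ → (M \ {a}) ⊆ F₁ ∪ F₂ →
      ((M \ {a}) ∩ F₂).Nonempty → (M \ {a}) ∩ (F₁ ∩ F₂) = ∅ → b ∈ F₁ → False := by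
    intro G₁ G₂ hG₁ hG₂ hGcov hGne₂ hGempty hbG₁
    set U : Set α := (M \ {a}) ∩ G₁ with hU
    set V : Set α := (M \ {a}) ∩ G₂ with hV
    have hUV : U ∩ V = ∅ := by
      rw [Set.eq_empty_iff_forall_notMem]
      rintro x ⟨⟨hx1, hx2⟩, ⟨_, hx4⟩⟩
      exact Set.eq_empty_iff_forall_notMem.1 hGempty x ⟨hx1, hx2, hx4⟩
    have hclU : closure U ⊆ U ∪ {a} := by
      intro x hx
      have hxM : x ∈ M := hMcl.closure_subset (closure_mono (by
        intro y hy; exact hy.1.1) hx)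
      have hxG : x ∈ G₁ := hG₁.closure_subset (closure_mono (by
        intro y hy; exact hy.2) hx)
      by_cases hxa : x = a
      · exact Or.inr hxa
      · exact Or.inl ⟨⟨hxM, hxa⟩, hxG⟩
    have hclV : closure V ⊆ V ∪ {a} := by
      intro x hx
      have hxM : x ∈ M := hMcl.closure_subset (closure_mono (by
        intro y hy; exact hy.1.1) hx)
      have hxG : x ∈ G₂ := hG₂.closure_subset (closure_mono (by
        intro y hy; exact hy.2) hx)
      by_cases hxa : x = a
      · exact Or.inr hxa
      · exact Or.inl ⟨⟨hxM, hxa⟩, hxG⟩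
    set P : Set α := U ∪ {a} with hP
    set Q : Set α := V ∪ {a} with hQ
    have hPcl : IsClosed P := by
      apply isClosed_of_closure_subset
      rw [hP, closure_union, closure_singleton]
      exact Set.union_subset (hclU.trans (by intro y hy; exact hy)) subset_union_right
    have hQcl : IsClosed Q := by
      apply isClosed_of_closure_subset
      rw [hQ, closure_union, closure_singleton]
      exact Set.union_subset (hclV.trans (by intro y hy; exact hy)) subset_union_right
    have hPQ : P ∪ Q = M := by
      apply Set.Subset.antisymm
      · rintro x ((⟨⟨h,_⟩,_⟩ | h) | (⟨⟨h,_⟩,_⟩ | h)) <;> first | exact h | exact h ▸ haM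
      · intro x hxM
        by_cases hxa : x = a
        · exact Or.inl (Or.inr hxa)
        · rcases hGcov ⟨hxM, hxa⟩ with h | h
          · exact Or.inl (Or.inl ⟨⟨hxM, hxa⟩, h⟩)
          · exact Or.inr (Or.inl ⟨⟨hxM, hxa⟩, h⟩)
    have hint : P ∩ Q ⊆ {a} := by
      rintro x ⟨(hxU | hxa), (hxV | hxa)⟩
      · exact absurd (Set.mem_inter hxU hxV) (by rw [Set.eq_empty_iff_forall_notMem] at hUV; exact hUV x)
      · exact hxa
      · exact hxa
      · exact hxa
    have haP : a ∈ P := Or.inr rfl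
    have hPconn : IsPreconnected P :=
      lemA hM hPQ (by rw [hPcl.closure_eq]; exact fun x (hx : x ∈ P ∩ M) => hx.1)
        (by rw [hQcl.closure_eq]; exact fun x (hx : x ∈ Q ∩ M) => hx.1) hint haP
    have hbP : b ∈ P := Or.inl ⟨⟨hbM, fun h => hab (Set.mem_singleton_iff.1 h).symm⟩, hbG₁⟩
    have hPM : P = M := hmin P (hPQ ▸ subset_union_left) hPcl hPconn haP hbP
    obtain ⟨y, hyMa, hyG₂⟩ := hGne₂
    have hyP : y ∈ P := hPM.symm ▸ hyMa.1
    rcases hyP with hyU | hya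
    · exact Set.eq_empty_iff_forall_notMem.1 hUV y ⟨hyU, hyMa, hyG₂⟩
    · exact hyMa.2 hya
  have hbMa : b ∈ M \ {a} := ⟨hbM, fun h => hab (Set.mem_singleton_iff.1 h).symm⟩
  rcases hcov hbMa with hbF | hbF
  · exact key F₁ F₂ h₁ h₂ hcov hne₂ hempty hbF
  · refine key F₂ F₁ h₂ h₁ (fun x hx => (hcov hx).symm) hne₁ ?_ hbF
    rw [inter_comm F₂ F₁]; exact hempty

/-- Two-point theorem: a minimal continuum `M` containing two points `a ≠ b` stays
preconnected after removing both points. -/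
private lemma twoPoint {α : Type*} [TopologicalSpace α] [T1Space α] {M : Set α} {a b : α}
    (hM : IsPreconnected M) (hMcl : IsClosed M) (haM : a ∈ M) (hbM : b ∈ M) (hab : a ≠ b)
    (hmin : ∀ M' ⊆ M, IsClosed M' → IsPreconnected M' → a ∈ M' → b ∈ M' → M' = M) :
    IsPreconnected (M \ {a, b}) := by
  have hBa : IsPreconnected (M \ {a}) := lemB hM hMcl haM hbM hab hmin
  have hBb : IsPreconnected (M \ {b}) := lemB hM hMcl hbM haM hab.symm
    (fun M' h1 h2 h3 h4 h5 => hmin M' h1 h2 h3 h5 h4)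
  rw [isPreconnected_closed_iff]
  intro F₁ F₂ h₁ h₂ hcov hne₁ hne₂
  by_contra hne
  have hempty : (M \ {a, b}) ∩ (F₁ ∩ F₂) = ∅ := not_nonempty_iff_eq_empty.1 hne
  set U : Set α := (M \ {a, b}) ∩ F₁ with hUdef
  set V : Set α := (M \ {a, b}) ∩ F₂ with hVdef
  have hUsub : U ⊆ M \ {a, b} := fun x hx => hx.1
  have hVsub : V ⊆ M \ {a, b} := fun x hx => hx.1
  have hUV : U ∪ V = M \ {a, b} := by
    apply Set.Subset.antisymm (Set.union_subset hUsub hVsub)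
    intro x hx
    rcases hcov hx with h | h
    · exact Or.inl ⟨hx, h⟩
    · exact Or.inr ⟨hx, h⟩
  have hdisj : U ∩ V = ∅ := by
    rw [Set.eq_empty_iff_forall_notMem]
    rintro x ⟨⟨hx1, hx2⟩, ⟨_, hx4⟩⟩
    exact Set.eq_empty_iff_forall_notMem.1 hempty x ⟨hx1, hx2, hx4⟩
  have hclU : closure U ⊆ U ∪ {a, b} := by
    intro x hx
    have hxM : x ∈ M := hMcl.closure_subset (closure_mono (fun y hy => hy.1.1) hx)
    have hxF : x ∈ F₁ := h₁.closure_subset (closure_mono (fun y hy => hy.2) hx)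
    by_cases hxab : x ∈ ({a, b} : Set α)
    · exact Or.inr hxab
    · exact Or.inl ⟨⟨hxM, hxab⟩, hxF⟩
  have hclV : closure V ⊆ V ∪ {a, b} := by
    intro x hx
    have hxM : x ∈ M := hMcl.closure_subset (closure_mono (fun y hy => hy.1.1) hx)
    have hxF : x ∈ F₂ := h₂.closure_subset (closure_mono (fun y hy => hy.2) hx)
    by_cases hxab : x ∈ ({a, b} : Set α)
    · exact Or.inr hxab
    · exact Or.inl ⟨⟨hxM, hxab⟩, hxF⟩
  -- P := U ∪ {a} is preconnected, as a closed-in-(M \ {b}) piece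
  have habM : a ∈ M \ {b} := ⟨haM, fun h => hab (Set.mem_singleton_iff.1 h)⟩
  have hbaM : b ∈ M \ {a} := ⟨hbM, fun h => hab (Set.mem_singleton_iff.1 h).symm⟩
  have hPQa : (U ∪ {a}) ∪ (V ∪ {a}) = M \ {b} := by
    have : U ∪ V ∪ {a} = M \ {b} := by
      rw [hUV]
      ext x
      constructor
      · rintro (⟨hxM, hxab⟩ | hxa)
        · exact ⟨hxM, fun h => hxab (Or.inr h)⟩
        · exact (Set.mem_singleton_iff.1 hxa) ▸ habM
      · rintro ⟨hxM, hxb⟩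
        by_cases hxa : x = a
        · exact Or.inr hxa
        · refine Or.inl ⟨hxM, ?_⟩
          simp only [Set.mem_insert_iff, Set.mem_singleton_iff]
          push_neg
          exact ⟨hxa, fun h => hxb h⟩
    rw [← this]
    ext x
    simp only [Set.mem_union, Set.mem_singleton_iff]
    tauto
  have hPconn : IsPreconnected (U ∪ {a}) := by
    refine lemA hBb hPQa ?_ ?_ ?_ (Or.inr rfl)
    · intro x ⟨hx1, hx2⟩
      rw [closure_union, closure_singleton] at hx1
      rcases hx1 with hx1 | hx1
      · rcases hclU hx1 with h | h
        · exact Or.inl h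
        · rcases h with h | h
          · exact Or.inr h
          · exact absurd h hx2.2
      · exact Or.inr hx1
    · intro x ⟨hx1, hx2⟩
      rw [closure_union, closure_singleton] at hx1
      rcases hx1 with hx1 | hx1
      · rcases hclV hx1 with h | h
        · exact Or.inl h
        · rcases h with h | h
          · exact Or.inr h
          · exact absurd h hx2.2
      · exact Or.inr hx1
    · rintro x ⟨(hxU | hxa), (hxV | hxa)⟩
      · exact absurd (Set.mem_inter hxU hxV)
          (by rw [Set.eq_empty_iff_forall_notMem] at hdisj; exact hdisj x)
      · exact hxa
      · exact hxa
      · exact hxa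
  -- P' := U ∪ {b} is preconnected, as a closed-in-(M \ {a}) piece
  have hPQb : (U ∪ {b}) ∪ (V ∪ {b}) = M \ {a} := by
    have : U ∪ V ∪ {b} = M \ {a} := by
      rw [hUV]
      ext x
      constructor
      · rintro (⟨hxM, hxab⟩ | hxb)
        · exact ⟨hxM, fun h => hxab (Or.inl (Set.mem_singleton_iff.1 h))⟩
        · exact (Set.mem_singleton_iff.1 hxb) ▸ hbaM
      · rintro ⟨hxM, hxa⟩
        by_cases hxb : x = b
        · exact Or.inr hxb
        · refine Or.inl ⟨hxM, ?_⟩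
          simp only [Set.mem_insert_iff, Set.mem_singleton_iff]
          push_neg
          exact ⟨fun h => hxa h, hxb⟩
    rw [← this]
    ext x
    simp only [Set.mem_union, Set.mem_singleton_iff]
    tauto
  have hPconn' : IsPreconnected (U ∪ {b}) := by
    refine lemA hBa hPQb ?_ ?_ ?_ (Or.inr rfl)
    · intro x ⟨hx1, hx2⟩
      rw [closure_union, closure_singleton] at hx1
      rcases hx1 with hx1 | hx1
      · rcases hclU hx1 with h | h
        · exact Or.inl h
        · rcases h with h | h
          · exact absurd h hx2.2
          · exact Or.inr h
      · exact Or.inr hx1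
    · intro x ⟨hx1, hx2⟩
      rw [closure_union, closure_singleton] at hx1
      rcases hx1 with hx1 | hx1
      · rcases hclV hx1 with h | h
        · exact Or.inl h
        · rcases h with h | h
          · exact absurd h hx2.2
          · exact Or.inr h
      · exact Or.inr hx1
    · rintro x ⟨(hxU | hxb), (hxV | hxb)⟩
      · exact absurd (Set.mem_inter hxU hxV)
          (by rw [Set.eq_empty_iff_forall_notMem] at hdisj; exact hdisj x)
      · exact hxb
      · exact hxb
      · exact hxb
  -- K := U ∪ {a, b} is a proper closed preconnected subset of M containing a, b
  obtain ⟨u, huU⟩ := hne₁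
  have hKconn : IsPreconnected ((U ∪ {a}) ∪ (U ∪ {b})) :=
    IsPreconnected.union u (Or.inl huU) (Or.inl huU) hPconn hPconn'
  have hKeq : (U ∪ {a}) ∪ (U ∪ {b}) = U ∪ {a, b} := by
    ext x
    simp only [Set.mem_union, Set.mem_insert_iff, Set.mem_singleton_iff]
    tauto
  rw [hKeq] at hKconn
  have hKcl : IsClosed (U ∪ {a, b}) := by
    apply isClosed_of_closure_subset
    rw [closure_union]
    refine Set.union_subset (hclU.trans ?_) ?_
    · exact fun y hy => hy
    · have : closure ({a, b} : Set α) = {a, b} := by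
        rw [show ({a, b} : Set α) = {a} ∪ {b} by rfl, closure_union,
          closure_singleton, closure_singleton]
      rw [this]
      exact Set.subset_union_right
  have hKM : U ∪ {a, b} = M := by
    refine hmin _ ?_ hKcl hKconn (Or.inr (Or.inl rfl)) (Or.inr (Or.inr rfl))
    exact Set.union_subset (fun x hx => hx.1.1)
      (by rintro x (h | h)
          · exact (show x = a from h) ▸ haM
          · exact (Set.mem_singleton_iff.1 h) ▸ hbM)
  obtain ⟨v, hvV⟩ := hne₂
  have hvM : v ∈ U ∪ {a, b} := hKM.symm ▸ (hVsub hvV).1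
  rcases hvM with hvU | hvab
  · exact Set.eq_empty_iff_forall_notMem.1 hdisj v ⟨hvU, hvV⟩
  · exact (hVsub hvV).2 hvab

/-- The intersection of a chain of nonempty compact preconnected sets in a T2 space
is preconnected. -/
private lemma chainInter {α : Type*} [TopologicalSpace α] [T2Space α] {c : Set (Set α)}
    (hch : IsChain (· ⊆ ·) c) (hne : c.Nonempty)
    (hcpt : ∀ s ∈ c, IsCompact s) (hconn : ∀ s ∈ c, IsPreconnected s)
    (hnonempty : ∀ s ∈ c, s.Nonempty) :
    IsPreconnected (⋂₀ c) := by
  have hKcl : IsClosed (⋂₀ c) := isClosed_sInter fun s hs => (hcpt s hs).isClosed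
  obtain ⟨s₀, hs₀⟩ := hne
  have hK : IsCompact (⋂₀ c) :=
    (hcpt s₀ hs₀).of_isClosed_subset hKcl (Set.sInter_subset_of_mem hs₀)
  rw [isPreconnected_iff_subset_of_fully_disjoint_closed hKcl]
  intro u v hu hv hcov hdisj
  obtain ⟨U₁, U₂, hU₁, hU₂, hsub₁, hsub₂, hUdisj⟩ :=
    SeparatedNhds.of_isCompact_isCompact (hK.inter_right hu) (hK.inter_right hv)
      (hdisj.mono inter_subset_right inter_subset_right)
  have hKsub : ⋂₀ c ⊆ U₁ ∪ U₂ := by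
    intro x hx
    rcases hcov hx with h | h
    · exact Or.inl (hsub₁ ⟨hx, h⟩)
    · exact Or.inr (hsub₂ ⟨hx, h⟩)
  -- some member of the chain is contained in U₁ ∪ U₂
  haveI : Nonempty c := ⟨⟨s₀, hs₀⟩⟩
  have hmem : ∃ s ∈ c, s ⊆ U₁ ∪ U₂ := by
    by_contra hno
    push_neg at hno
    have hne' : ∀ s : c, ((s : Set α) \ (U₁ ∪ U₂)).Nonempty := fun s =>
      Set.diff_nonempty.2 (hno s s.2)
    have hdir : Directed (· ⊇ ·) (fun s : c => (s : Set α) \ (U₁ ∪ U₂)) := by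
      intro s t
      rcases hch.total s.2 t.2 with h' | h'
      · exact ⟨s, Set.Subset.refl _, Set.diff_subset_diff_left h'⟩
      · exact ⟨t, Set.diff_subset_diff_left h', Set.Subset.refl _⟩
    obtain ⟨x, hx⟩ := IsCompact.nonempty_iInter_of_directed_nonempty_isCompact_isClosed
      (fun s : c => (s : Set α) \ (U₁ ∪ U₂)) hdir hne'
      (fun s => ((hcpt s s.2).diff (hU₁.union hU₂)))
      (fun s => ((hcpt s s.2).isClosed.sdiff (hU₁.union hU₂)))
    have hxK : x ∈ ⋂₀ c := by
      rw [Set.mem_sInter]; intro t ht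
      exact (Set.mem_iInter.1 hx ⟨t, ht⟩).1
    exact (Set.mem_iInter.1 hx ⟨s₀, hs₀⟩).2 (hKsub hxK)
  obtain ⟨s, hsc, hsUU⟩ := hmem
  have hone : s ∩ U₁ = ∅ ∨ s ∩ U₂ = ∅ := by
    by_contra h
    push_neg at h
    obtain ⟨x, hx⟩ := hconn s hsc U₁ U₂ hU₁ hU₂ hsUU
      h.1 h.2
    exact Set.disjoint_iff.1 hUdisj ⟨hx.2.1, hx.2.2⟩
  rcases hone with h | h
  · right
    intro x hx
    rcases hcov hx with hxu | hxv
    · exact absurd (Set.mem_inter (Set.sInter_subset_of_mem hsc hx) (hsub₁ ⟨hx, hxu⟩))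
        (Set.eq_empty_iff_forall_notMem.1 h x)
    · exact hxv
  · left
    intro x hx
    rcases hcov hx with hxu | hxv
    · exact hxu
    · exact absurd (Set.mem_inter (Set.sInter_subset_of_mem hsc hx) (hsub₂ ⟨hx, hxv⟩))
        (Set.eq_empty_iff_forall_notMem.1 h x)

/-- Let `X` be a metric space and `f : X → (0,1)` a proper continuous map (preimages of
compact subsets of `(0,1)` are compact).  Suppose that for every compact interval
`J ⊆ (0,1)` there is a compact connected subset `Y ⊆ X` with `f(Y) = J`.  Then there
exists a closed connected subset `Q` of `X` with `f(Q) = (0,1)`. -/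
theorem stmt14 {X : Type*} [MetricSpace X] (f : X → ℝ) (hcont : Continuous f)
    (hrange : ∀ x, f x ∈ Set.Ioo (0 : ℝ) 1)
    (hproper : ∀ J : Set ℝ, J ⊆ Set.Ioo 0 1 → IsCompact J → IsCompact (f ⁻¹' J))
    (hfill : ∀ a b : ℝ, 0 < a → a ≤ b → b < 1 →
      ∃ Y : Set X, IsCompact Y ∧ IsConnected Y ∧ f '' Y = Set.Icc a b) :
    ∃ Q : Set X, IsClosed Q ∧ IsConnected Q ∧ f '' Q = Set.Ioo 0 1 := by
  classical
  -- `X` is locally compact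
  haveI : LocallyCompactSpace X := by
    refine ⟨fun x n hn => ?_⟩
    obtain ⟨ε, hε, hball⟩ := Metric.mem_nhds_iff.1 hn
    obtain ⟨hx0, hx1⟩ := hrange x
    refine ⟨f ⁻¹' Set.Icc (f x / 2) ((f x + 1) / 2) ∩ Metric.closedBall x (ε / 2),
      ?_, ?_, ?_⟩
    · refine Filter.inter_mem ?_ (Metric.closedBall_mem_nhds x (by positivity))
      refine Filter.mem_of_superset (IsOpen.mem_nhds (isOpen_Ioo.preimage hcont) ?_)
        (Set.preimage_mono Set.Ioo_subset_Icc_self)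
      exact ⟨by linarith, by linarith⟩
    · refine Set.Subset.trans Set.inter_subset_right (Set.Subset.trans ?_ hball)
      exact Metric.closedBall_subset_ball (by linarith)
    · refine (hproper _ ?_ isCompact_Icc).inter_right Metric.isClosed_closedBall
      intro t ht
      exact ⟨by linarith [ht.1], by linarith [ht.2]⟩
  -- the sets `Y n` filling `[1/(n+2), 1 - 1/(n+2)]`
  have haux : ∀ n : ℕ, (0:ℝ) < 1/((n:ℝ)+2) ∧ 1/((n:ℝ)+2) ≤ 1 - 1/((n:ℝ)+2) ∧
      1 - 1/((n:ℝ)+2) < 1 := by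
    intro n
    have hn2 : (0:ℝ) < (n:ℝ)+2 := by positivity
    have h12 : 1/((n:ℝ)+2) ≤ 1/2 := by
      rw [div_le_div_iff₀ hn2 (by norm_num)]
      have := Nat.cast_nonneg (α := ℝ) n
      linarith
    have h0 : (0:ℝ) < 1/((n:ℝ)+2) := by positivity
    exact ⟨h0, by linarith, by linarith⟩
  have hfill' : ∀ n : ℕ, ∃ Y : Set X, IsCompact Y ∧ IsConnected Y ∧
      f '' Y = Set.Icc (1/((n:ℝ)+2)) (1 - 1/((n:ℝ)+2)) := by
    intro n
    obtain ⟨h0, h1, h2⟩ := haux n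
    exact hfill _ _ h0 h1 h2
  choose Y Ycpt Yconn Yim using hfill'
  have hYlow : ∀ n : ℕ, ∃ y ∈ Y n, f y = 1/((n:ℝ)+2) := by
    intro n
    have hmem : (1/((n:ℝ)+2)) ∈ f '' Y n := by
      rw [Yim n]; exact ⟨le_refl _, (haux n).2.1⟩
    obtain ⟨y, hy, hfy⟩ := hmem
    exact ⟨y, hy, hfy⟩
  have hYhigh : ∀ n : ℕ, ∃ y ∈ Y n, f y = 1 - 1/((n:ℝ)+2) := by
    intro n
    have hmem : (1 - 1/((n:ℝ)+2)) ∈ f '' Y n := by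
      rw [Yim n]; exact ⟨(haux n).2.1, le_refl _⟩
    obtain ⟨y, hy, hfy⟩ := hmem
    exact ⟨y, hy, hfy⟩
  have hpick : ∀ m : ℝ, 0 < m → ∃ n : ℕ, 1/((n:ℝ)+2) < m := by
    intro m hm
    obtain ⟨n, hn⟩ := exists_nat_one_div_lt hm
    refine ⟨n, lt_of_le_of_lt ?_ hn⟩
    apply one_div_le_one_div_of_le
    · positivity
    · linarith
  -- the embedding into the compactification
  set e : X → OnePoint X × ℝ := fun x => ((x : OnePoint X), f x) with he_def
  have he : Continuous e := Continuous.prodMk OnePoint.continuous_coe hcont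
  have hind : Topology.IsInducing e := by
    refine Topology.IsInducing.of_comp he continuous_fst ?_
    exact OnePoint.isOpenEmbedding_coe.toIsEmbedding.toIsInducing
  -- positive distance of compact sets from the two ends
  have hKbound : ∀ K : Set X, IsCompact K →
      ∃ m : ℝ, 0 < m ∧ ∀ x ∈ K, m ≤ f x ∧ f x ≤ 1 - m := by
    intro K hK
    rcases K.eq_empty_or_nonempty with h | h
    · exact ⟨1/2, by norm_num, by simp [h]⟩
    · obtain ⟨μ, hμmem, hμlb⟩ := (hK.image hcont).exists_isLeast (h.image f)
      obtain ⟨ν, hνmem, hνub⟩ := (hK.image hcont).exists_isGreatest (h.image f)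
      obtain ⟨x₀, _, hx₀⟩ := hμmem
      obtain ⟨x₁, _, hx₁⟩ := hνmem
      have hμ0 : 0 < μ := hx₀ ▸ (hrange x₀).1
      have hν1 : ν < 1 := hx₁ ▸ (hrange x₁).2
      refine ⟨min μ (1 - ν), lt_min hμ0 (by linarith), fun x hx => ?_⟩
      constructor
      · exact le_trans (min_le_left _ _) (hμlb ⟨x, hx, rfl⟩)
      · have := hνub ⟨x, hx, rfl⟩
        have := min_le_right μ (1 - ν)
        linarith
  -- basic neighborhoods of the two points at infinity
  have hnbhd0 : ∀ O : Set (OnePoint X × ℝ), IsOpen O → ((∞ : OnePoint X), (0:ℝ)) ∈ O →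
      ∃ m : ℝ, 0 < m ∧ ∀ x : X, f x < m → e x ∈ O := by
    intro O hO hmem
    obtain ⟨u, v, hu, hv, hmu, hmv, huv⟩ := isOpen_prod_iff.1 hO _ _ hmem
    have hKc : IsCompact (((↑) : X → OnePoint X) ⁻¹' u)ᶜ :=
      ((OnePoint.isOpen_iff_of_mem' hmu).1 hu).1
    obtain ⟨m₁, hm₁0, hm₁⟩ := hKbound _ hKc
    obtain ⟨δ, hδ0, hδ⟩ := Metric.isOpen_iff.1 hv 0 hmv
    refine ⟨min m₁ δ, lt_min hm₁0 hδ0, fun x hx => ?_⟩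
    have hfx : f x < m₁ := lt_of_lt_of_le hx (min_le_left _ _)
    have hxu : (x : OnePoint X) ∈ u := by
      by_contra hxu
      exact absurd (hm₁ x hxu).1 (not_le.2 hfx)
    have hfv : f x ∈ v := by
      apply hδ
      rw [Metric.mem_ball, Real.dist_eq, sub_zero, abs_of_pos (hrange x).1]
      exact lt_of_lt_of_le hx (min_le_right _ _)
    exact huv ⟨hxu, hfv⟩
  have hnbhd1 : ∀ O : Set (OnePoint X × ℝ), IsOpen O → ((∞ : OnePoint X), (1:ℝ)) ∈ O →
      ∃ m : ℝ, 0 < m ∧ ∀ x : X, 1 - m < f x → e x ∈ O := by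
    intro O hO hmem
    obtain ⟨u, v, hu, hv, hmu, hmv, huv⟩ := isOpen_prod_iff.1 hO _ _ hmem
    have hKc : IsCompact (((↑) : X → OnePoint X) ⁻¹' u)ᶜ :=
      ((OnePoint.isOpen_iff_of_mem' hmu).1 hu).1
    obtain ⟨m₁, hm₁0, hm₁⟩ := hKbound _ hKc
    obtain ⟨δ, hδ0, hδ⟩ := Metric.isOpen_iff.1 hv 1 hmv
    refine ⟨min m₁ δ, lt_min hm₁0 hδ0, fun x hx => ?_⟩
    have hfx : 1 - m₁ < f x := by
      have := min_le_left m₁ δ; linarith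
    have hxu : (x : OnePoint X) ∈ u := by
      by_contra hxu
      exact absurd (hm₁ x hxu).2 (not_le.2 hfx)
    have hfv : f x ∈ v := by
      apply hδ
      rw [Metric.mem_ball, Real.dist_eq, abs_of_neg (by linarith [(hrange x).2])]
      have := min_le_right m₁ δ; linarith
    exact huv ⟨hxu, hfv⟩
  -- the limit set
  set W : Set (OnePoint X × ℝ) := ⋃ n, e '' Y n with hW_def
  set Z₀ : Set (OnePoint X × ℝ) := closure W with hZ₀_def
  set p : OnePoint X × ℝ := (∞, 0) with hp_def
  set q : OnePoint X × ℝ := (∞, 1) with hq_def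
  have hWZ₀ : W ⊆ Z₀ := subset_closure
  have heW : ∀ n : ℕ, e '' Y n ⊆ W := fun n => Set.subset_iUnion (fun n => e '' Y n) n
  have hp : p ∈ Z₀ := by
    rw [hZ₀_def, mem_closure_iff]
    intro O hO hpO
    obtain ⟨m, hm0, hm⟩ := hnbhd0 O hO hpO
    obtain ⟨n, hn⟩ := hpick m hm0
    obtain ⟨y, hy, hfy⟩ := hYlow n
    exact ⟨e y, hm y (by rw [hfy]; exact hn), heW n (Set.mem_image_of_mem e hy)⟩
  have hq : q ∈ Z₀ := by
    rw [hZ₀_def, mem_closure_iff]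
    intro O hO hqO
    obtain ⟨m, hm0, hm⟩ := hnbhd1 O hO hqO
    obtain ⟨n, hn⟩ := hpick m hm0
    obtain ⟨y, hy, hfy⟩ := hYhigh n
    exact ⟨e y, hm y (by rw [hfy]; linarith), heW n (Set.mem_image_of_mem e hy)⟩
  have hWsub : W ⊆ (Set.univ : Set (OnePoint X)) ×ˢ Set.Icc (0:ℝ) 1 := by
    intro z hz
    obtain ⟨n, hzn⟩ := Set.mem_iUnion.1 hz
    obtain ⟨x, _, rfl⟩ := hzn
    exact ⟨trivial, le_of_lt (hrange x).1, le_of_lt (hrange x).2⟩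
  have hZ₀cl : IsClosed Z₀ := isClosed_closure
  have hZ₀sub : Z₀ ⊆ (Set.univ : Set (OnePoint X)) ×ˢ Set.Icc (0:ℝ) 1 :=
    closure_minimal hWsub (isClosed_univ.prod isClosed_Icc)
  have hZ₀cpt : IsCompact Z₀ :=
    (isCompact_univ.prod isCompact_Icc).of_isClosed_subset hZ₀cl hZ₀sub
  haveI : CompactSpace Z₀ := isCompact_iff_compactSpace.1 hZ₀cpt
  set p' : Z₀ := ⟨p, hp⟩ with hp'_def
  set q' : Z₀ := ⟨q, hq⟩ with hq'_def
  -- every clopen neighbourhood of p' contains q'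
  have hq'comp : q' ∈ connectedComponent p' := by
    rw [connectedComponent_eq_iInter_isClopen, Set.mem_iInter]
    rintro ⟨C, hCclopen, hCp⟩
    simp only
    by_contra hq'C
    obtain ⟨O, hO, hOeq⟩ := isOpen_induced_iff.1 hCclopen.2
    have hpO : p ∈ O := by rw [← hOeq] at hCp; exact hCp
    obtain ⟨O', hO', hOeq'⟩ := isOpen_induced_iff.1 hCclopen.compl.2
    have hqO' : q ∈ O' := by
      have : q' ∈ Cᶜ := hq'C
      rw [← hOeq'] at this; exact this
    obtain ⟨m₀, hm₀0, hm₀⟩ := hnbhd0 O hO hpO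
    obtain ⟨m₁, hm₁0, hm₁⟩ := hnbhd1 O' hO' hqO'
    obtain ⟨n, hn⟩ := hpick (min m₀ m₁) (lt_min hm₀0 hm₁0)
    -- the connected set `Rn`
    set Rn : Set Z₀ := Subtype.val ⁻¹' (e '' Y n) with hRn_def
    have hRn_sub : e '' Y n ⊆ Z₀ := (heW n).trans hWZ₀
    have hRn_conn : IsPreconnected Rn := by
      rw [← Topology.IsInducing.subtypeVal.isPreconnected_image]
      rw [Subtype.image_preimage_coe, Set.inter_eq_right.2 hRn_sub]
      exact ((Yconn n).isPreconnected).image e he.continuousOn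
    obtain ⟨y, hy, hfy⟩ := hYlow n
    have heyO : e y ∈ O := hm₀ y (by rw [hfy]; exact lt_of_lt_of_le hn (min_le_left _ _))
    have hzC : (⟨e y, hRn_sub (Set.mem_image_of_mem e hy)⟩ : Z₀) ∈ Rn ∩ C := by
      constructor
      · exact Set.mem_image_of_mem e hy
      · rw [← hOeq]; exact heyO
    have hRnC : Rn ⊆ C :=
      hRn_conn.subset_isClopen hCclopen ⟨_, hzC⟩
    obtain ⟨y', hy', hfy'⟩ := hYhigh n
    have heyO' : e y' ∈ O' := hm₁ y' (by
      rw [hfy']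
      have : 1/((n:ℝ)+2) < m₁ := lt_of_lt_of_le hn (min_le_right _ _)
      linarith)
    have hz'Rn : (⟨e y', hRn_sub (Set.mem_image_of_mem e hy')⟩ : Z₀) ∈ Rn :=
      Set.mem_image_of_mem e hy'
    have hz'C : (⟨e y', hRn_sub (Set.mem_image_of_mem e hy')⟩ : Z₀) ∈ Cᶜ := by
      rw [← hOeq']; exact heyO'
    exact hz'C (hRnC hz'Rn)
  -- the continuum `Z` joining `p` and `q`
  set Z : Set (OnePoint X × ℝ) := Subtype.val '' connectedComponent p' with hZ_def
  have hZconn : IsPreconnected Z :=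
    Topology.IsInducing.subtypeVal.isPreconnected_image.2 isPreconnected_connectedComponent
  have hZcpt : IsCompact Z :=
    (isClosed_connectedComponent.isCompact).image continuous_subtype_val
  have hpZ : p ∈ Z := ⟨p', mem_connectedComponent, rfl⟩
  have hqZ : q ∈ Z := ⟨q', hq'comp, rfl⟩
  have hZZ₀ : Z ⊆ Z₀ := by
    rintro _ ⟨z', _, rfl⟩; exact z'.2
  -- Zorn's lemma: a minimal subcontinuum containing p and q
  set 𝒜 : Set (Set (OnePoint X × ℝ)) :=
    {M | M ⊆ Z ∧ p ∈ M ∧ q ∈ M ∧ IsClosed M ∧ IsPreconnected M} with h𝒜_def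
  have hZorn : ∃ M, M ⊆ Z ∧ Minimal (· ∈ 𝒜) M := by
    refine zorn_superset_nonempty 𝒜 ?_ Z ⟨subset_rfl, hpZ, hqZ, hZcpt.isClosed, hZconn⟩
    intro c hc𝒜 hchain hcne
    refine ⟨⋂₀ c, ?_, fun s hs => Set.sInter_subset_of_mem hs⟩
    obtain ⟨s₀, hs₀⟩ := hcne
    refine ⟨(Set.sInter_subset_of_mem hs₀).trans (hc𝒜 hs₀).1,
      Set.mem_sInter.2 (fun s hs => (hc𝒜 hs).2.1),
      Set.mem_sInter.2 (fun s hs => (hc𝒜 hs).2.2.1),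
      isClosed_sInter (fun s hs => (hc𝒜 hs).2.2.2.1), ?_⟩
    exact chainInter hchain ⟨s₀, hs₀⟩
      (fun s hs => hZcpt.of_isClosed_subset (hc𝒜 hs).2.2.2.1 (hc𝒜 hs).1)
      (fun s hs => (hc𝒜 hs).2.2.2.2)
      (fun s hs => ⟨p, (hc𝒜 hs).2.1⟩)
  obtain ⟨M, hMZ, hMmin⟩ := hZorn
  obtain ⟨hM𝒜sub, hpM, hqM, hMcl, hMconn⟩ := hMmin.1
  have hpq : p ≠ q := by
    intro h
    have : (0:ℝ) = 1 := congrArg Prod.snd h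
    norm_num at this
  have hmin' : ∀ M' ⊆ M, IsClosed M' → IsPreconnected M' → p ∈ M' → q ∈ M' → M' = M := by
    intro M' hsub hcl hconn hpM' hqM'
    have hM'𝒜 : M' ∈ 𝒜 := ⟨hsub.trans hM𝒜sub, hpM', hqM', hcl, hconn⟩
    exact Set.Subset.antisymm hsub (hMmin.2 hM'𝒜 hsub)
  have htp : IsPreconnected (M \ {p, q}) := twoPoint hMconn hMcl hpM hqM hpq hmin'
  -- the image of M under snd contains [0,1]
  have hicc : Set.Icc (0:ℝ) 1 ⊆ Prod.snd '' M := by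
    apply IsPreconnected.Icc_subset (hMconn.image _ continuous_snd.continuousOn)
    · exact ⟨p, hpM, rfl⟩
    · exact ⟨q, hqM, rfl⟩
  -- structure of points of Z₀
  have hstruct : ∀ z ∈ Z₀, z = p ∨ z = q ∨ ∃ x : X, z = e x := by
    rintro ⟨z₁, z₂⟩ hz
    have hz₂ : z₂ ∈ Set.Icc (0:ℝ) 1 := (hZ₀sub hz).2
    induction z₁ using OnePoint.rec with
    | infty =>
      rcases eq_or_lt_of_le hz₂.1 with h0 | h0
      · exact Or.inl (by rw [hp_def, ← h0])
      rcases eq_or_lt_of_le hz₂.2 with h1 | h1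
      · exact Or.inr (Or.inl (by rw [hq_def, h1]))
      exfalso
      set K : Set X := f ⁻¹' (Set.Icc (z₂/2) ((z₂+1)/2)) with hK_def
      have hKcpt : IsCompact K := by
        refine hproper _ ?_ isCompact_Icc
        intro t ht
        exact ⟨lt_of_lt_of_le (by linarith) ht.1, lt_of_le_of_lt ht.2 (by linarith)⟩
      have hucl : IsClosed (((↑) : X → OnePoint X) '' K) :=
        OnePoint.isClosed_image_coe.2 ⟨hKcpt.isClosed, hKcpt⟩
      have hOopen : IsOpen (((((↑) : X → OnePoint X) '' K)ᶜ) ×ˢ Set.Ioo (z₂/2) ((z₂+1)/2)) :=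
        hucl.isOpen_compl.prod isOpen_Ioo
      have hmemO : ((∞ : OnePoint X), z₂) ∈
          (((((↑) : X → OnePoint X) '' K)ᶜ) ×ˢ Set.Ioo (z₂/2) ((z₂+1)/2)) := by
        refine ⟨OnePoint.infty_notMem_image_coe, ⟨by linarith, by linarith⟩⟩
      obtain ⟨w, hwO, hwW⟩ := mem_closure_iff.1 hz _ hOopen hmemO
      obtain ⟨n, hwn⟩ := Set.mem_iUnion.1 hwW
      obtain ⟨x, _, rfl⟩ := hwn
      have hxK : x ∈ K := ⟨le_of_lt hwO.2.1, le_of_lt hwO.2.2⟩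
      exact hwO.1 (Set.mem_image_of_mem _ hxK)
    | coe x =>
      right; right
      refine ⟨x, ?_⟩
      by_contra hne
      have hne' : z₂ ≠ f x := fun h => hne (by rw [h])
      set δ : ℝ := |z₂ - f x| with hδ_def
      have hδ0 : 0 < δ := abs_pos.2 (sub_ne_zero.2 hne')
      have huopen : IsOpen (((↑) : X → OnePoint X) '' (f ⁻¹' Metric.ball (f x) (δ/2))) :=
        OnePoint.isOpenMap_coe _ (Metric.isOpen_ball.preimage hcont)
      have hOopen : IsOpen ((((↑) : X → OnePoint X) '' (f ⁻¹' Metric.ball (f x) (δ/2))) ×ˢ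
          Metric.ball z₂ (δ/2)) := huopen.prod Metric.isOpen_ball
      have hmemO : (((x : OnePoint X)), z₂) ∈ ((((↑) : X → OnePoint X) ''
          (f ⁻¹' Metric.ball (f x) (δ/2))) ×ˢ Metric.ball z₂ (δ/2)) := by
        constructor
        · exact Set.mem_image_of_mem _ (by simp [Metric.mem_ball, hδ0, dist_self])
        · simp [Metric.mem_ball, hδ0, dist_self]
      obtain ⟨w, hwO, hwW⟩ := mem_closure_iff.1 hz _ hOopen hmemO
      obtain ⟨n, hwn⟩ := Set.mem_iUnion.1 hwW
      obtain ⟨y, _, rfl⟩ := hwn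
      obtain ⟨y', hy', hyy⟩ := hwO.1
      have hyy' : y' = y := OnePoint.coe_injective hyy
      subst hyy'
      have h1 : |f y' - f x| < δ/2 := by
        have := hy'
        rwa [Set.mem_preimage, Metric.mem_ball, Real.dist_eq] at this
      have h2 : |f y' - z₂| < δ/2 := by
        have := hwO.2
        rwa [Metric.mem_ball, Real.dist_eq] at this
      have : |z₂ - f x| < δ := by
        calc |z₂ - f x| = |(z₂ - f y') + (f y' - f x)| := by ring_nf
          _ ≤ |z₂ - f y'| + |f y' - f x| := abs_add_le _ _
          _ < δ/2 + δ/2 := by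
              rw [abs_sub_comm z₂ (f y')]
              exact add_lt_add h2 h1
          _ = δ := by ring
      exact absurd this (by rw [hδ_def]; exact lt_irrefl _)
  -- the final set Q
  set Q : Set X := e ⁻¹' M with hQ_def
  have hQcl : IsClosed Q := hMcl.preimage he
  have himgQ : e '' Q = M \ {p, q} := by
    apply Set.Subset.antisymm
    · rintro _ ⟨x, hx, rfl⟩
      refine ⟨hx, ?_⟩
      rintro (h | h)
      · exact OnePoint.coe_ne_infty x (congrArg Prod.fst h)
      · exact OnePoint.coe_ne_infty x (congrArg Prod.fst h)
    · rintro z ⟨hzM, hzpq⟩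
      have hzZ₀ : z ∈ Z₀ := hZZ₀ (hM𝒜sub hzM)
      rcases hstruct z hzZ₀ with h | h | ⟨x, rfl⟩
      · exact absurd (Or.inl h) hzpq
      · exact absurd (Or.inr h) hzpq
      · exact ⟨x, hzM, rfl⟩
  have hQconn : IsPreconnected Q := by
    rw [← hind.isPreconnected_image, himgQ]
    exact htp
  have hsndne : ∀ c : ℝ, c ∈ Set.Icc (0:ℝ) 1 → c ≠ 0 → c ≠ 1 → ∃ x ∈ Q, f x = c := by
    intro c hc hc0 hc1
    obtain ⟨z, hzM, hz2⟩ := hicc hc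
    have hzpq : z ∉ ({p, q} : Set (OnePoint X × ℝ)) := by
      rintro (h | h)
      · exact hc0 (by rw [← hz2, h])
      · exact hc1 (by rw [← hz2, Set.mem_singleton_iff.1 h])
    have : z ∈ e '' Q := by rw [himgQ]; exact ⟨hzM, hzpq⟩
    obtain ⟨x, hx, rfl⟩ := this
    exact ⟨x, hx, hz2⟩
  have hQne : Q.Nonempty := by
    obtain ⟨x, hx, _⟩ := hsndne (1/2) (by norm_num) (by norm_num) (by norm_num)
    exact ⟨x, hx⟩
  refine ⟨Q, hQcl, ⟨hQne, hQconn⟩, ?_⟩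
  apply Set.Subset.antisymm
  · rintro _ ⟨x, _, rfl⟩
    exact hrange x
  · intro c hc
    obtain ⟨x, hx, hfx⟩ := hsndne c ⟨le_of_lt hc.1, le_of_lt hc.2⟩ (ne_of_gt hc.1)
      (ne_of_lt hc.2)
    exact ⟨x, hx, hfx⟩
end

section
/- Let K ⊂ ℝ² be compact, let f : ℝ² → [−∞, ∞) be a function that is finite and continuous exactly on an open strip S = ℝ × I (I a bounded open interval), equals −∞ off S, and is bounded above on K ∩ S. Define F(x,y,z) = z − f(x,y) (with F = +∞ where f = −∞). Let C ⊂ ℝ³ be a closed set such that C ∩ (ℝ × Ī × ℝ) ⊆ K × ℝ and such that inf{z : (x,y,z) ∈ C, y ∈ I} > −∞. Then for every real λ, the set C ∩ {F ≤ λ} is compact; in particular, if inf_C F < ∞ then F attains its minimum on C. -/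
/-!
A point of `C` with `z - f(x,y) ≤ λ` cannot lie off the strip, where the height is `+∞`; so it
lies over `K`, and its height `z` is squeezed between the lower bound `m` of `C` over the strip
and `λ + sup_{K ∩ S} f`. Hence the sublevel set is a closed subset of the compact box
`K × [m, λ + sup f]`. Continuity of `z - f` is automatic because `z` is finite, so
`EReal` addition is continuous at `(z, -f(x,y))` even where `f = -∞`. A minimiser is then
found on any nonempty sublevel set.
-/

open Set

theorem Continuous.coe_ereal_sub {X : Type*} [TopologicalSpace X] {u : X → ℝ} {g : X → EReal}
    (hu : Continuous u) (hg : Continuous g) : Continuous fun x => (u x : EReal) - g x :=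
  continuous_iff_continuousAt.2 fun _ =>
    (EReal.continuousAt_add (Or.inl (EReal.coe_ne_top _)) (Or.inl (EReal.coe_ne_bot _))).comp
      ((continuous_coe_real_ereal.comp hu).prodMk hg.neg).continuousAt

theorem EReal.le_add_of_coe_sub_le {z a b : ℝ} {e : EReal} (h : (z : EReal) - e ≤ a)
    (he : e ≤ b) : z ≤ a + b := by
  induction e using EReal.rec with
  | bot => simp at h
  | top => simp at he
  | coe r =>
    have hr : r ≤ b := mod_cast he
    have hz : z - r ≤ a := mod_cast h
    linarith

theorem exists_isMinOn_of_isCompact_sublevel {α β : Type*} [LinearOrder α] [TopologicalSpace α]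
    [ClosedIicTopology α] [TopologicalSpace β] {s : Set β} {f : β → α} {a : α} {x₀ : β}
    (hf : ContinuousOn f s) (ha : IsCompact {x ∈ s | f x ≤ a}) (hx₀ : x₀ ∈ s) (h₀ : f x₀ ≤ a) :
    ∃ x ∈ s, IsMinOn f s x := by
  obtain ⟨x, hx, hmin⟩ := ha.exists_isMinOn ⟨x₀, hx₀, h₀⟩ (hf.mono fun _ hy => hy.1)
  refine ⟨x, hx.1, fun y hy => ?_⟩
  by_cases hya : f y ≤ a
  · exact hmin ⟨hy, hya⟩
  · exact (hmin ⟨hx₀, h₀⟩).trans (h₀.trans (not_le.1 hya).le)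

noncomputable def heightAboveGraph (f : ℝ × ℝ → EReal) (p : ℝ × ℝ × ℝ) : EReal :=
  (p.2.2 : EReal) - f (p.1, p.2.1)

theorem continuous_heightAboveGraph {f : ℝ × ℝ → EReal} (hf : Continuous f) :
    Continuous (heightAboveGraph f) :=
  (continuous_snd.comp continuous_snd).coe_ereal_sub
    (hf.comp (continuous_fst.prodMk (continuous_fst.comp continuous_snd)))

theorem isCompact_sublevel_heightAboveGraph {K : Set (ℝ × ℝ)} (hK : IsCompact K) {c d : ℝ}
    {f : ℝ × ℝ → EReal} (hf : Continuous f) (hout : ∀ p : ℝ × ℝ, p.2 ∉ Ioo c d → f p = ⊥)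
    {b : ℝ} (hb : ∀ p ∈ K, p.2 ∈ Ioo c d → f p ≤ b)
    {C : Set (ℝ × ℝ × ℝ)} (hC : IsClosed C) (hCK : ∀ p ∈ C, p.2.1 ∈ Icc c d → (p.1, p.2.1) ∈ K)
    {m : ℝ} (hm : ∀ p ∈ C, p.2.1 ∈ Ioo c d → m ≤ p.2.2) (a : ℝ) :
    IsCompact {p ∈ C | heightAboveGraph f p ≤ a} := by
  have hbox : IsCompact (Homeomorph.prodAssoc ℝ ℝ ℝ '' K ×ˢ Icc m (a + b)) :=
    (hK.prod isCompact_Icc).image (Homeomorph.prodAssoc ℝ ℝ ℝ).continuous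
  refine hbox.of_isClosed_subset
    (hC.inter (isClosed_le (continuous_heightAboveGraph hf) continuous_const)) ?_
  rintro ⟨x, y, z⟩ ⟨hpC, hpa⟩
  have hy : y ∈ Ioo c d := by
    by_contra hy
    simp [heightAboveGraph, hout (x, y) hy] at hpa
  have hxy : (x, y) ∈ K := hCK _ hpC (Ioo_subset_Icc_self hy)
  exact ⟨((x, y), z), ⟨hxy, hm _ hpC hy, EReal.le_add_of_coe_sub_le hpa (hb _ hxy hy)⟩, rfl⟩

theorem stmt16_general (K : Set (ℝ × ℝ)) (hK : IsCompact K)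
    (c d : ℝ)
    (f : ℝ × ℝ → EReal) (hfcont : Continuous f)
    (hout : ∀ p : ℝ × ℝ, p.2 ∉ Set.Ioo c d → f p = ⊥)
    (hbdd : ∃ Cb : ℝ, ∀ p ∈ K, p.2 ∈ Set.Ioo c d → f p ≤ ((Cb : ℝ) : EReal))
    (C : Set (ℝ × ℝ × ℝ)) (hCcl : IsClosed C)
    (hC1 : ∀ p ∈ C, p.2.1 ∈ Set.Icc c d → (p.1, p.2.1) ∈ K)
    (hC2 : ∃ m : ℝ, ∀ p ∈ C, p.2.1 ∈ Set.Ioo c d → m ≤ p.2.2) :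
    (∀ lam : ℝ,
      IsCompact {p ∈ C | ((p.2.2 : ℝ) : EReal) - f (p.1, p.2.1) ≤ ((lam : ℝ) : EReal)}) ∧
    ((∃ p ∈ C, ((p.2.2 : ℝ) : EReal) - f (p.1, p.2.1) ≠ ⊤) →
      ∃ q ∈ C, ∀ p ∈ C,
        ((q.2.2 : ℝ) : EReal) - f (q.1, q.2.1) ≤ ((p.2.2 : ℝ) : EReal) - f (p.1, p.2.1)) := by
  obtain ⟨b, hb⟩ := hbdd
  obtain ⟨m, hm⟩ := hC2
  have hcompact := isCompact_sublevel_heightAboveGraph hK hfcont hout hb hCcl hC1 hm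
  refine ⟨hcompact, fun ⟨p₀, hp₀, hne⟩ => ?_⟩
  exact exists_isMinOn_of_isCompact_sublevel (continuous_heightAboveGraph hfcont).continuousOn
    (hcompact _) hp₀ (EReal.le_coe_toReal hne)

/-- Let `K ⊆ ℝ²` be compact and `S = ℝ × (c,d)` an open strip.  Let
`f : ℝ² → [-∞, ∞)` be continuous (as an extended-real-valued function), finite exactly
on `S`, equal to `-∞` off `S`, and bounded above on `K ∩ S`.  Define
`F(x,y,z) = z - f(x,y)` (so `F = +∞` where `f = -∞`).  Let `C ⊆ ℝ³` be a closed set with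
`C ∩ (ℝ × [c,d] × ℝ) ⊆ K × ℝ` and `inf {z : (x,y,z) ∈ C, y ∈ (c,d)} > -∞`.  Then for
every real `lam` the set `C ∩ {F ≤ lam}` is compact; in particular if `inf_C F < ∞`
then `F` attains its minimum on `C`. -/
theorem stmt16 (K : Set (ℝ × ℝ)) (hK : IsCompact K)
    (c d : ℝ) (hcd : c < d)
    (f : ℝ × ℝ → EReal) (hfcont : Continuous f)
    (hftop : ∀ p : ℝ × ℝ, f p ≠ ⊤)
    (hfin : ∀ p : ℝ × ℝ, p.2 ∈ Set.Ioo c d → f p ≠ ⊥)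
    (hout : ∀ p : ℝ × ℝ, p.2 ∉ Set.Ioo c d → f p = ⊥)
    (hbdd : ∃ Cb : ℝ, ∀ p ∈ K, p.2 ∈ Set.Ioo c d → f p ≤ ((Cb : ℝ) : EReal))
    (C : Set (ℝ × ℝ × ℝ)) (hCcl : IsClosed C)
    (hC1 : ∀ p ∈ C, p.2.1 ∈ Set.Icc c d → (p.1, p.2.1) ∈ K)
    (hC2 : ∃ m : ℝ, ∀ p ∈ C, p.2.1 ∈ Set.Ioo c d → m ≤ p.2.2) :
    (∀ lam : ℝ,
      IsCompact {p ∈ C | ((p.2.2 : ℝ) : EReal) - f (p.1, p.2.1) ≤ ((lam : ℝ) : EReal)}) ∧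
    ((∃ p ∈ C, ((p.2.2 : ℝ) : EReal) - f (p.1, p.2.1) ≠ ⊤) →
      ∃ q ∈ C, ∀ p ∈ C,
        ((q.2.2 : ℝ) : EReal) - f (q.1, q.2.1) ≤ ((p.2.2 : ℝ) : EReal) - f (p.1, p.2.1)) :=
  stmt16_general K hK c d f hfcont hout hbdd C hCcl hC1 hC2
end

section
/- Let X be a compact metric space and f : X → ℝ continuous. Let K_n be nonempty closed connected subsets of X converging (in the metric on nonempty closed subsets given by sup-norm difference of distance functions) to a nonempty closed set K, and suppose f(K_n) = [0, r_n] for some r_n ≥ 0 for each n. If C is a nonempty closed subset of K with K \ C also closed, and f vanishes exactly on C within K (f = 0 on C and f > 0 on K \ C), then K \ C is empty. -/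
open Metric

/-- Let `X` be a compact metric space and `f : X → ℝ` continuous.  Let `Kₙ` be nonempty
closed connected subsets of `X` converging (uniform convergence of distance functions,
i.e. in the metric on nonempty closed subsets given by the sup-norm difference of
distance functions) to a nonempty closed set `L`, with `f(Kₙ) = [0, rₙ]`, `rₙ ≥ 0`.
If `C` is a nonempty closed subset of `L` with `L \ C` also closed, `f = 0` on `C` and
`f > 0` on `L \ C`, then `L \ C` is empty. -/
theorem stmt19 {X : Type*} [MetricSpace X] [CompactSpace X]
    (f : X → ℝ) (hf : Continuous f)
    (K : ℕ → Set X) (hne : ∀ n, (K n).Nonempty) (hcl : ∀ n, IsClosed (K n))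
    (hconn : ∀ n, IsConnected (K n))
    (r : ℕ → ℝ) (hr : ∀ n, 0 ≤ r n) (himg : ∀ n, f '' K n = Set.Icc 0 (r n))
    (L : Set X) (hLne : L.Nonempty) (hLcl : IsClosed L)
    (hconv : TendstoUniformly (fun n p => Metric.infDist p (K n))
      (fun p => Metric.infDist p L) Filter.atTop)
    (C : Set X) (hCne : C.Nonempty) (hCcl : IsClosed C) (hCL : C ⊆ L)
    (hLC : IsClosed (L \ C))
    (hf0 : ∀ p ∈ C, f p = 0) (hfpos : ∀ p ∈ L \ C, 0 < f p) :
    L \ C = ∅ := by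
  by_contra h
  rw [← Ne, ← Set.nonempty_iff_ne_empty] at h
  obtain ⟨q, hq⟩ := h
  have hLCcomp : IsCompact (L \ C) := hLC.isCompact
  obtain ⟨x₀, hx₀, hminx⟩ := hLCcomp.exists_isMinOn ⟨q, hq⟩ hf.continuousOn
  set m := f x₀ with hm
  have hmpos : 0 < m := hfpos x₀ hx₀
  -- points of K n approximating q
  choose qn hqnK hdqn using fun n =>
    ((hcl n).isCompact).exists_infDist_eq_dist (hne n) q
  have hdist0 : Filter.Tendsto (fun n => infDist q (K n)) Filter.atTop (nhds 0) := by
    have := hconv.tendsto_at q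
    rwa [infDist_zero_of_mem hq.1] at this
  have hqnq : Filter.Tendsto qn Filter.atTop (nhds q) := by
    rw [tendsto_iff_dist_tendsto_zero]
    have he : (fun n => dist (qn n) q) = fun n => infDist q (K n) := by
      funext n; rw [dist_comm, ← hdqn]
    rw [he]; exact hdist0
  have hfqn : Filter.Tendsto (fun n => f (qn n)) Filter.atTop (nhds (f q)) :=
    (hf.tendsto q).comp hqnq
  have hmq : m ≤ f q := hminx hq
  have hev : ∀ᶠ n in Filter.atTop, m / 2 < f (qn n) :=
    hfqn.eventually (eventually_gt_nhds (by linarith))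
  obtain ⟨N, hN⟩ := Filter.eventually_atTop.mp hev
  -- pick p n ∈ K (n + N) with f (p n) = m / 2
  have hpick : ∀ n, ∃ x ∈ K (n + N), f x = m / 2 := by
    intro n
    have h1 : m / 2 < f (qn (n + N)) := hN (n + N) (Nat.le_add_left _ _)
    have h2 : f (qn (n + N)) ∈ Set.Icc 0 (r (n + N)) := by
      rw [← himg (n + N)]; exact Set.mem_image_of_mem f (hqnK (n + N))
    have h3 : m / 2 ∈ Set.Icc 0 (r (n + N)) :=
      ⟨by linarith, le_trans h1.le h2.2⟩
    rw [← himg (n + N)] at h3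
    obtain ⟨x, hxK, hxf⟩ := h3
    exact ⟨x, hxK, hxf⟩
  choose p hpK hpf using hpick
  obtain ⟨p₀, -, φ, hφ, hφtend⟩ :=
    isCompact_univ.tendsto_subseq (fun n => Set.mem_univ (p n))
  have hfp₀ : f p₀ = m / 2 := by
    have h1 : Filter.Tendsto (fun k => f (p (φ k))) Filter.atTop (nhds (f p₀)) :=
      (hf.tendsto p₀).comp hφtend
    have h2 : (fun k => f (p (φ k))) = fun _ => m / 2 := by
      funext k; exact hpf (φ k)
    rw [h2] at h1
    exact tendsto_nhds_unique h1 tendsto_const_nhds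
  have hp₀L : p₀ ∈ L := by
    have h1 : Filter.Tendsto (fun k => infDist (p (φ k)) L) Filter.atTop
        (nhds (infDist p₀ L)) := ((continuous_infDist_pt L).tendsto p₀).comp hφtend
    have h2 : Filter.Tendsto (fun k => infDist (p (φ k)) L) Filter.atTop (nhds 0) := by
      rw [Metric.tendsto_atTop]
      intro ε hε
      rw [Metric.tendstoUniformly_iff] at hconv
      obtain ⟨M, hM⟩ := Filter.eventually_atTop.mp (hconv ε hε)
      refine ⟨M, fun k hk => ?_⟩
      have hx : p (φ k) ∈ K (φ k + N) := hpK (φ k)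
      have hMk : M ≤ φ k + N := le_trans hk (le_trans hφ.le_apply (Nat.le_add_right _ _))
      have h0 : infDist (p (φ k)) (K (φ k + N)) = 0 := infDist_zero_of_mem hx
      calc dist (infDist (p (φ k)) L) 0
          = dist (infDist (p (φ k)) L) (infDist (p (φ k)) (K (φ k + N))) := by rw [h0]
        _ < ε := hM (φ k + N) hMk (p (φ k))
    have h0 : infDist p₀ L = 0 := tendsto_nhds_unique h1 h2
    exact (IsClosed.mem_iff_infDist_zero hLcl hLne).mpr h0
  by_cases hp₀C : p₀ ∈ C
  · have := hf0 p₀ hp₀C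
    rw [hfp₀] at this; linarith
  · have hge : m ≤ f p₀ := hminx ⟨hp₀L, hp₀C⟩
    rw [hfp₀] at hge; linarith
end
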